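/- arXiv:0805.3333 — 2 statements merged into one kernel-verified Lean document; each statement's English description precedes it below -/
import Mathlib

section
/- Let A = [[A11, A12],[A21, A22]] be an invertible N×N matrix with A11 invertible, and B = [[0,0],[0,B22]] with B22 invertible N'×N'. Set G = B22^{-1}(A22 − A21 A11^{-1} A12), which is invertible since A is. Then the stable subspace of A^{-1}B (the sum of generalized eigenspaces of A^{-1}B for eigenvalues of negative real part) equals {(−A11^{-1} A12 r, r) : r ∈ E_-(G)}, where E_-(G) is the stable subspace of G. In particular dim E_-(A^{-1}B) = dim E_-(G). -/
open Matrix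

/-! Writing `C = A₁₁⁻¹A₁₂`, `S = A₂₂ - A₂₁C` and `Φ r = (-C r, r)`, one has `A Φ r = (0, S r)`, so
`A⁻¹B = Φ ∘ G⁻¹ ∘ π` with `π` the projection onto the second block, a left inverse of `Φ`.
A generalized eigenvector of `A⁻¹B` for an eigenvalue `μ ≠ 0` lies in its range, hence in the
range of `Φ`, and `Φ` intertwines `G⁻¹` with `A⁻¹B`; so the generalized eigenspaces of `A⁻¹B` at
`μ ≠ 0` are the images under `Φ` of those of `G⁻¹`. Finally `G⁻¹` and `G` have the same stable
subspace, since `μ ↦ μ⁻¹` preserves the sign of the real part. -/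

/-- The stable subspace of a matrix: the sum of the generalized eigenspaces associated with
eigenvalues of negative real part. -/
noncomputable def stableSubspace {ι : Type} [Fintype ι] (M : Matrix ι ι ℂ) :
    Submodule ℂ (ι → ℂ) :=
  ⨆ μ : ℂ, ⨆ _ : μ.re < 0, Module.End.maxGenEigenspace M.mulVecLin μ

namespace Module.End

variable {K V W : Type*} [Field K] [AddCommGroup V] [Module K V] [AddCommGroup W] [Module K W]

theorem maxGenEigenspace_le_range (f : End K V) {μ : K} (hμ : μ ≠ 0) :
    f.maxGenEigenspace μ ≤ LinearMap.range f := by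
  suffices ∀ (k : ℕ) (v : V), ((f - μ • 1) ^ k) v = 0 → v ∈ LinearMap.range f from
    fun v hv ↦ let ⟨k, hk⟩ := (mem_maxGenEigenspace f μ v).mp hv; this k v hk
  intro k
  induction k with
  | zero => intro v hv; simp_all
  | succ k ih =>
    intro v hv
    rw [pow_succ, mul_apply] at hv
    have hsub : f v - μ • v ∈ LinearMap.range f := ih _ hv
    have hμv : μ • v ∈ LinearMap.range f := by
      simpa using Submodule.sub_mem _ (LinearMap.mem_range_self f v) hsub
    simpa [smul_smul, hμ] using Submodule.smul_mem _ μ⁻¹ hμv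

theorem maxGenEigenspace_comp_comp_eq_map (g : End K W) (φ : W →ₗ[K] V) (π : V →ₗ[K] W)
    (hπφ : π ∘ₗ φ = LinearMap.id) {μ : K} (hμ : μ ≠ 0) :
    maxGenEigenspace (φ ∘ₗ g ∘ₗ π) μ = (g.maxGenEigenspace μ).map φ := by
  set f : End K V := φ ∘ₗ g ∘ₗ π
  have hφ_inj : Function.Injective φ := Function.LeftInverse.injective (g := π) (by
    intro w; simpa using LinearMap.congr_fun hπφ w)
  have hshift : (f - μ • 1) ∘ₗ φ = φ ∘ₗ (g - μ • 1) := by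
    ext w
    have : π (φ w) = w := LinearMap.congr_fun hπφ w
    simp [f, this]
  have hpow (k : ℕ) (w : W) : ((f - μ • 1) ^ k) (φ w) = φ (((g - μ • 1) ^ k) w) :=
    LinearMap.congr_fun (commute_pow_left_of_commute hshift k) w
  apply le_antisymm
  · intro v hv
    obtain ⟨w, rfl⟩ : v ∈ LinearMap.range φ :=
      LinearMap.range_comp_le_range _ φ (maxGenEigenspace_le_range f hμ hv)
    obtain ⟨k, hk⟩ := (mem_maxGenEigenspace _ _ _).mp hv
    refine ⟨w, (mem_maxGenEigenspace _ _ _).mpr ⟨k, hφ_inj ?_⟩, rfl⟩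
    rw [← hpow, hk, map_zero]
  · rintro _ ⟨w, hw, rfl⟩
    obtain ⟨k, hk⟩ := (mem_maxGenEigenspace _ _ _).mp hw
    exact (mem_maxGenEigenspace _ _ _).mpr ⟨k, by rw [hpow, hk, map_zero]⟩

theorem maxGenEigenspace_le_of_mul_eq_one (f g : End K V) (hgf : g * f = 1) (hfg : f * g = 1)
    {μ : K} (hμ : μ ≠ 0) :
    f.maxGenEigenspace μ ≤ g.maxGenEigenspace μ⁻¹ := by
  intro v hv
  obtain ⟨k, hk⟩ := (mem_maxGenEigenspace _ _ _).mp hv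
  have hcomm : Commute g (f - μ • 1) :=
    (show Commute g f by rw [Commute, SemiconjBy, hgf, hfg]).sub_right
      ((Commute.one_right g).smul_right μ)
  have hfactor : g - μ⁻¹ • 1 = (-μ⁻¹) • (g * (f - μ • 1)) := by
    rw [mul_sub, hgf, mul_smul_comm, mul_one, smul_sub, smul_smul, neg_mul, inv_mul_cancel₀ hμ]
    module
  refine (mem_maxGenEigenspace _ _ _).mpr ⟨k, ?_⟩
  rw [hfactor, smul_pow, hcomm.mul_pow, LinearMap.smul_apply, mul_apply, hk, map_zero, smul_zero]

end Module.End

section SumGraph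

variable {K : Type*} [Semiring K] {m n : Type*}

def sumGraph (L : (n → K) →ₗ[K] (m → K)) : (n → K) →ₗ[K] (m ⊕ n → K) :=
  (LinearEquiv.sumArrowLequivProdArrow m n K K).symm.toLinearMap
    ∘ₗ LinearMap.prod L LinearMap.id

@[simp]
theorem sumGraph_apply (L : (n → K) →ₗ[K] (m → K)) (r : n → K) :
    sumGraph L r = Sum.elim (L r) r := by
  ext (i | i) <;> rfl

theorem funLeft_inr_comp_sumGraph (L : (n → K) →ₗ[K] (m → K)) :
    LinearMap.funLeft K K Sum.inr ∘ₗ sumGraph L = LinearMap.id := by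
  ext r : 1
  simp [LinearMap.funLeft]

theorem sumGraph_injective (L : (n → K) →ₗ[K] (m → K)) : Function.Injective (sumGraph L) :=
  Function.LeftInverse.injective (g := LinearMap.funLeft K K Sum.inr)
    fun r ↦ LinearMap.congr_fun (funLeft_inr_comp_sumGraph L) r

end SumGraph

namespace Matrix

variable {K : Type*} [CommRing K] {m n : Type*} [Fintype m] [Fintype n] [DecidableEq m]

theorem fromBlocks_mulVec_sumGraph {A11 : Matrix m m K} (A12 : Matrix m n K)
    (A21 : Matrix n m K) (A22 : Matrix n n K) (hA11 : IsUnit A11.det) (r : n → K) :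
    fromBlocks A11 A12 A21 A22 *ᵥ sumGraph (-(A11⁻¹ * A12)).mulVecLin r
      = Sum.elim (0 : m → K) ((A22 - A21 * A11⁻¹ * A12) *ᵥ r) := by
  rw [sumGraph_apply, fromBlocks_mulVec, Sum.elim_comp_inl, Sum.elim_comp_inr, mulVecLin_apply,
    neg_mulVec, mulVec_neg, mulVec_neg, mulVec_mulVec, mulVec_mulVec, ← Matrix.mul_assoc,
    mul_nonsing_inv _ hA11, Matrix.one_mul, neg_add_cancel, sub_mulVec, Matrix.mul_assoc,
    neg_add_eq_sub]

theorem isUnit_det_schurComplement [DecidableEq n] {A11 : Matrix m m K} {A12 : Matrix m n K}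
    {A21 : Matrix n m K} {A22 : Matrix n n K} (hA11 : IsUnit A11.det)
    (hA : IsUnit (fromBlocks A11 A12 A21 A22).det) :
    IsUnit (A22 - A21 * A11⁻¹ * A12).det := by
  have := A11.invertibleOfIsUnitDet hA11
  rw [det_fromBlocks₁₁, invOf_eq_nonsing_inv] at hA
  exact isUnit_of_mul_isUnit_right hA

theorem mulVecLin_inv_fromBlocks_mul_fromBlocks_zero [DecidableEq n] {A11 : Matrix m m K}
    {A12 : Matrix m n K} {A21 : Matrix n m K} {A22 B22 : Matrix n n K}
    (hA11 : IsUnit A11.det) (hB22 : IsUnit B22.det)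
    (hA : IsUnit (fromBlocks A11 A12 A21 A22).det) :
    ((fromBlocks A11 A12 A21 A22)⁻¹ * fromBlocks 0 0 0 B22).mulVecLin
      = sumGraph (-(A11⁻¹ * A12)).mulVecLin
          ∘ₗ (B22⁻¹ * (A22 - A21 * A11⁻¹ * A12))⁻¹.mulVecLin ∘ₗ LinearMap.funLeft K K Sum.inr := by
  set S := A22 - A21 * A11⁻¹ * A12
  have hS : IsUnit S.det := isUnit_det_schurComplement hA11 hA
  have hSG : S * (B22⁻¹ * S)⁻¹ = B22 := by
    rw [mul_inv_rev, nonsing_inv_nonsing_inv _ hB22, ← Matrix.mul_assoc, mul_nonsing_inv _ hS,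
      Matrix.one_mul]
  refine LinearMap.ext fun v ↦ ?_
  set w := (B22⁻¹ * S)⁻¹ *ᵥ (v ∘ Sum.inr)
  have hBv : fromBlocks 0 0 0 B22 *ᵥ v
      = fromBlocks A11 A12 A21 A22 *ᵥ sumGraph (-(A11⁻¹ * A12)).mulVecLin w := by
    rw [fromBlocks_mulVec_sumGraph A12 A21 A22 hA11, fromBlocks_mulVec, mulVec_mulVec, hSG]
    simp
  simp only [mulVecLin_apply, ← mulVec_mulVec, hBv]
  rw [mulVec_mulVec, nonsing_inv_mul _ hA, one_mulVec]
  rfl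

end Matrix

theorem Complex.ne_zero_of_re_neg {z : ℂ} (h : z.re < 0) : z ≠ 0 := by
  rintro rfl
  simp at h

theorem Complex.inv_re_neg {z : ℂ} (h : z.re < 0) : z⁻¹.re < 0 := by
  rw [Complex.inv_re]
  exact div_neg_of_neg_of_pos h (Complex.normSq_pos.mpr (Complex.ne_zero_of_re_neg h))

theorem stableSubspace_nonsing_inv {ι : Type} [Fintype ι] [DecidableEq ι] (M : Matrix ι ι ℂ)
    (hM : IsUnit M.det) : stableSubspace M⁻¹ = stableSubspace M := by
  have hMM' : M.mulVecLin * M⁻¹.mulVecLin = 1 := by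
    rw [Module.End.mul_eq_comp, ← mulVecLin_mul, mul_nonsing_inv _ hM, mulVecLin_one]; rfl
  have hM'M : M⁻¹.mulVecLin * M.mulVecLin = 1 := by
    rw [Module.End.mul_eq_comp, ← mulVecLin_mul, nonsing_inv_mul _ hM, mulVecLin_one]; rfl
  apply le_antisymm <;> refine iSup₂_le fun μ h ↦ ?_
  · exact (Module.End.maxGenEigenspace_le_of_mul_eq_one _ _ hMM' hM'M
      (Complex.ne_zero_of_re_neg h)).trans (le_iSup₂_of_le μ⁻¹ (Complex.inv_re_neg h) le_rfl)
  · exact (Module.End.maxGenEigenspace_le_of_mul_eq_one _ _ hM'M hMM'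
      (Complex.ne_zero_of_re_neg h)).trans (le_iSup₂_of_le μ⁻¹ (Complex.inv_re_neg h) le_rfl)

theorem stableSubspace_eq_map_of_mulVecLin_eq {ι κ : Type} [Fintype ι] [Fintype κ]
    {M : Matrix ι ι ℂ} {N : Matrix κ κ ℂ} (φ : (κ → ℂ) →ₗ[ℂ] (ι → ℂ))
    (π : (ι → ℂ) →ₗ[ℂ] (κ → ℂ)) (hπφ : π ∘ₗ φ = LinearMap.id)
    (hM : M.mulVecLin = φ ∘ₗ N.mulVecLin ∘ₗ π) :
    stableSubspace M = (stableSubspace N).map φ := by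
  simp only [stableSubspace, Submodule.map_iSup, hM]
  exact iSup_congr fun μ ↦ iSup_congr fun h ↦
    Module.End.maxGenEigenspace_comp_comp_eq_map _ φ π hπφ (Complex.ne_zero_of_re_neg h)

/-- With `A = [[A11,A12],[A21,A22]]` invertible, `A11` invertible,
`B = [[0,0],[0,B22]]`, `B22` invertible, and `G = B22⁻¹(A22 − A21A11⁻¹A12)`, the stable
subspace of `A⁻¹B` is the image of the stable subspace of `G` under `r ↦ (−A11⁻¹A12 r, r)`;
in particular the two stable subspaces have the same dimension. -/
theorem stmt_3 {m n : Type} [Fintype m] [Fintype n] [DecidableEq m] [DecidableEq n]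
    (A11 : Matrix m m ℂ) (A12 : Matrix m n ℂ) (A21 : Matrix n m ℂ) (A22 B22 : Matrix n n ℂ)
    (hA11 : IsUnit A11.det) (hB22 : IsUnit B22.det)
    (hA : IsUnit (fromBlocks A11 A12 A21 A22).det) :
    stableSubspace ((fromBlocks A11 A12 A21 A22)⁻¹ * fromBlocks 0 0 0 B22)
      = Submodule.map
          (((LinearEquiv.sumArrowLequivProdArrow m n ℂ ℂ).symm.toLinearMap).comp
            (LinearMap.prod (-(A11⁻¹ * A12)).mulVecLin LinearMap.id))
          (stableSubspace (B22⁻¹ * (A22 - A21 * A11⁻¹ * A12)))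
    ∧ Module.finrank ℂ
          (stableSubspace ((fromBlocks A11 A12 A21 A22)⁻¹ * fromBlocks 0 0 0 B22))
        = Module.finrank ℂ (stableSubspace (B22⁻¹ * (A22 - A21 * A11⁻¹ * A12))) := by
  set G := B22⁻¹ * (A22 - A21 * A11⁻¹ * A12)
  have hG : IsUnit G.det := by
    rw [det_mul]
    exact (isUnit_nonsing_inv_det _ hB22).mul (isUnit_det_schurComplement hA11 hA)
  have hmain : stableSubspace ((fromBlocks A11 A12 A21 A22)⁻¹ * fromBlocks 0 0 0 B22)
      = (stableSubspace G).map (sumGraph (-(A11⁻¹ * A12)).mulVecLin) := by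
    rw [stableSubspace_eq_map_of_mulVecLin_eq _ _ (funLeft_inr_comp_sumGraph _)
      (mulVecLin_inv_fromBlocks_mul_fromBlocks_zero hA11 hB22 hA),
      stableSubspace_nonsing_inv G hG]
  refine ⟨hmain, ?_⟩
  rw [hmain]
  exact (LinearEquiv.finrank_eq (Submodule.equivMapOfInjective _ (sumGraph_injective _) _)).symm
end

section
/- Let A be an N×N Hermitian invertible matrix with exactly p negative and N−p positive eigenvalues (counted with multiplicity), and let B be an N×N matrix whose real part is positive definite. Then A^{-1}B has exactly p eigenvalues (counted with algebraic multiplicity) with negative real part and N−p with positive real part. -/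
/-!
Put `T = A⁻¹B` and `h(x, y) = x* A y`, a Hermitian form. Then
`h(Tx, x) + h(x, Tx) = x* (B + B*) x > 0` for `x ≠ 0`, so no eigenvalue of `T` is purely
imaginary, and Lyapunov's inertia argument shows that `h` is negative definite on the sum `V₋`
of the generalized eigenspaces of `T` for the eigenvalues with negative real part, and positive
definite on the analogous `V₊`. A subspace on which `h` is negative (positive) definite meets
the span of the eigenvectors of `A` with eigenvalue `≥ 0` (`≤ 0`) trivially, so
`dim V₋ ≤ p` and `dim V₊ ≤ N - p`; since `dim V₋ + dim V₊ = N`, both are equalities.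
-/

open Matrix Polynomial Module
open scoped ComplexOrder

lemma Module.End.apply_eq_smul_of_apply_eq_smul_add_smul {K M : Type*} [Field K]
    [AddCommGroup M] [Module K M] {T : End K M} {v w : M} {μ ν c : K}
    (hTv : T v = μ • v) (hTw : T w = ν • w + c • v) (hνμ : ν ≠ μ) :
    T (w + (c / (ν - μ)) • v) = ν • (w + (c / (ν - μ)) • v) := by
  rw [map_add, map_smul, hTv, hTw, smul_add, smul_smul, smul_smul, add_assoc, ← add_smul]
  congr 2
  field_simp [sub_ne_zero.mpr hνμ]
  ring

namespace LinearMap.IsSymm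

variable {V : Type*} [AddCommGroup V] [Module ℂ V] {h : V →ₗ⋆[ℂ] V →ₗ[ℂ] ℂ}

lemma im_apply_self (hh : h.IsSymm) (x : V) : (h x x).im = 0 :=
  Complex.conj_eq_iff_im.mp (hh.eq x x)

lemma apply_eq_zero_comm (hh : h.IsSymm) {x y : V} (hxy : h x y = 0) : h y x = 0 := by
  rw [← hh.eq, hxy, map_zero]

lemma re_apply_smul_add_apply_smul (hh : h.IsSymm) (μ : ℂ) (v : V) :
    (h (μ • v) v + h v (μ • v)).re = 2 * μ.re * (h v v).re := by
  simp only [map_smulₛₗ, smul_apply, smul_eq_mul, RingHom.id_apply, Complex.add_re,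
    Complex.mul_re, Complex.conj_re, Complex.conj_im, hh.im_apply_self]
  ring

protected lemma neg (hh : h.IsSymm) : (-h).IsSymm :=
  isSymm_def.mpr fun x y => by simp [← hh.eq x y]

lemma re_apply_self_neg_of_inf_ker (hh : h.IsSymm) {W : Submodule ℂ V} {v : V} (hvW : v ∈ W)
    (hv : (h v v).re < 0) (hker : ∀ w ∈ W ⊓ ker (h v), w ≠ 0 → (h w w).re < 0) :
    ∀ x ∈ W, x ≠ 0 → (h x x).re < 0 := by
  intro x hxW hx0
  have hvv : h v v ≠ 0 := fun h0 => by simp [h0] at hv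
  set a := h v x / h v v
  set w := x - a • v
  have hwker : h v w = 0 := by simp [w, a, hvv]
  have hw : w ∈ W ⊓ ker (h v) := ⟨W.sub_mem hxW (W.smul_mem a hvW), hwker⟩
  have hx : x = a • v + w := by simp [w]
  have hxx : (h x x).re = Complex.normSq a * (h v v).re + (h w w).re := by
    have : h x x = (starRingEnd ℂ a * a) * h v v + h w w := by
      rw [hx]
      simp only [map_add, map_smulₛₗ, add_apply, smul_apply, smul_eq_mul, RingHom.id_apply,
        hwker, hh.apply_eq_zero_comm hwker]
      ring
    rw [this, Complex.add_re, ← Complex.normSq_eq_conj_mul_self, Complex.re_ofReal_mul]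
  rw [hxx]
  by_cases hw0 : w = 0
  · have ha : a ≠ 0 := by intro ha; apply hx0; rw [hx, ha, hw0, zero_smul, add_zero]
    simpa [hw0] using mul_neg_of_pos_of_neg (Complex.normSq_pos.mpr ha) hv
  · nlinarith [hker w hw hw0, Complex.normSq_nonneg a]

/-- The compression `T' x = T x - (h v (T x) / h v v) • v` will do: if `T' w = ν • w` with
`ν ≠ μ`, then `T w = ν • w + c • v` with `c = h v (T w) / h v v`, so `w + (c / (ν - μ)) • v`
is an eigenvector of `T`. -/
lemma exists_compression (hh : h.IsSymm) {T : End ℂ V} {W : Submodule ℂ V}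
    (hTW : ∀ x ∈ W, T x ∈ W) (hacc : ∀ x ∈ W, x ≠ 0 → 0 < (h (T x) x + h x (T x)).re)
    (heig : ∀ (μ : ℂ), ∀ x ∈ W, x ≠ 0 → T x = μ • x → μ.re < 0)
    {v : V} {μ : ℂ} (hvW : v ∈ W) (hv0 : v ≠ 0) (hTv : T v = μ • v) (hvv : h v v ≠ 0) :
    ∃ T' : End ℂ V, (∀ x ∈ W ⊓ ker (h v), T' x ∈ W ⊓ ker (h v)) ∧
      (∀ x ∈ W ⊓ ker (h v), x ≠ 0 → 0 < (h (T' x) x + h x (T' x)).re) ∧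
      (∀ (ν : ℂ), ∀ x ∈ W ⊓ ker (h v), x ≠ 0 → T' x = ν • x → ν.re < 0) := by
  set T' : End ℂ V := T - smulRight ((h v v)⁻¹ • (h v ∘ₗ T)) v
  have hT' : ∀ y, T' y = T y - (h v (T y) / h v v) • v := fun y => by
    simp [T', div_eq_inv_mul]
  have hT'ker : ∀ y, h v (T' y) = 0 := fun y => by
    simp [T', mul_right_comm _ (h v (T y)), inv_mul_cancel₀ hvv]
  refine ⟨T', fun y hy => ⟨hT' y ▸ W.sub_mem (hTW y hy.1) (W.smul_mem _ hvW), hT'ker y⟩,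
    fun y hy hy0 => ?_, fun ν w hw hw0 hT'w => ?_⟩
  · have hvy : h v y = 0 := hy.2
    simpa [hT', hvy, hh.apply_eq_zero_comm hvy] using hacc y hy.1 hy0
  by_cases hνμ : ν = μ
  · exact hνμ ▸ heig μ v hvW hv0 hTv
  have hTw : T w = ν • w + (h v (T w) / h v v) • v := by rw [← hT'w, hT', sub_add_cancel]
  have hu0 : w + (h v (T w) / h v v / (ν - μ)) • v ≠ 0 := by
    intro hu
    have hc := congrArg (h v) hu
    simp only [map_add, map_smul, smul_eq_mul, mem_ker.mp hw.2, map_zero, zero_add, mul_eq_zero,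
      hvv, or_false] at hc
    exact hw0 (by simpa [hc] using hu)
  exact heig ν _ (W.add_mem hw.1 (W.smul_mem _ hvW)) hu0
    (End.apply_eq_smul_of_apply_eq_smul_add_smul hTv hTw hνμ)

theorem re_ne_zero_of_hasEigenvalue (hh : h.IsSymm) {T : End ℂ V}
    (hacc : ∀ x, x ≠ 0 → 0 < (h (T x) x + h x (T x)).re) {μ : ℂ} (hμ : T.HasEigenvalue μ) :
    μ.re ≠ 0 := by
  obtain ⟨v, hv⟩ := hμ.exists_hasEigenvector
  intro h0
  have := hacc v hv.2
  rw [hv.apply_eq_smul, hh.re_apply_smul_add_apply_smul, h0] at this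
  simp at this

variable [FiniteDimensional ℂ V]

/-- Induction on `dim W`: an eigenvector `v ∈ W` of `T` has `h v v < 0`, and `h` is negative
definite on `W ∩ ker (h v)` by the induction hypothesis applied to a compression of `T`. -/
theorem re_apply_self_neg_of_re_eigenvalue_neg (hh : h.IsSymm) (T : End ℂ V)
    (W : Submodule ℂ V) (hTW : ∀ x ∈ W, T x ∈ W)
    (hacc : ∀ x ∈ W, x ≠ 0 → 0 < (h (T x) x + h x (T x)).re)
    (heig : ∀ (μ : ℂ), ∀ x ∈ W, x ≠ 0 → T x = μ • x → μ.re < 0) :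
    ∀ x ∈ W, x ≠ 0 → (h x x).re < 0 := by
  induction hn : finrank ℂ W using Nat.strong_induction_on generalizing T W with
  | _ n ih =>
  intro x hxW hx0
  have : Nontrivial W :=
    Submodule.nontrivial_iff_ne_bot.mpr ((Submodule.ne_bot_iff W).mpr ⟨x, hxW, hx0⟩)
  obtain ⟨μ, hμ⟩ := End.exists_eigenvalue (T.restrict hTW)
  obtain ⟨⟨v, hvW⟩, hv⟩ := hμ.exists_hasEigenvector
  have hTv : T v = μ • v := congrArg Subtype.val hv.apply_eq_smul
  have hv0 : v ≠ 0 := fun h0 => hv.2 (Subtype.ext h0)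
  have hvv : (h v v).re < 0 := by
    have := hacc v hvW hv0
    rw [hTv, hh.re_apply_smul_add_apply_smul] at this
    nlinarith [heig μ v hvW hv0 hTv]
  have hvv0 : h v v ≠ 0 := fun h0 => by simp [h0] at hvv
  have hlt : finrank ℂ ↥(W ⊓ ker (h v)) < n := hn ▸ Submodule.finrank_lt_finrank_of_lt
    (SetLike.lt_iff_le_and_exists.mpr ⟨inf_le_left, v, hvW, fun hv' => hvv0 hv'.2⟩)
  obtain ⟨T', hT'W, hT'acc, hT'eig⟩ := hh.exists_compression hTW hacc heig hvW hv0 hTv hvv0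
  exact hh.re_apply_self_neg_of_inf_ker hvW hvv (ih _ hlt T' _ hT'W hT'acc hT'eig rfl) x hxW hx0

theorem re_apply_self_pos_of_re_eigenvalue_pos (hh : h.IsSymm) (T : End ℂ V)
    (W : Submodule ℂ V) (hTW : ∀ x ∈ W, T x ∈ W)
    (hacc : ∀ x ∈ W, x ≠ 0 → 0 < (h (T x) x + h x (T x)).re)
    (heig : ∀ (μ : ℂ), ∀ x ∈ W, x ≠ 0 → T x = μ • x → 0 < μ.re) :
    ∀ x ∈ W, x ≠ 0 → 0 < (h x x).re := by
  have := hh.neg.re_apply_self_neg_of_re_eigenvalue_neg (-T) W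
    (fun x hx => by simpa using W.neg_mem (hTW x hx))
    (fun x hx hx0 => by simpa using hacc x hx hx0)
    (fun μ x hx hx0 hTx => by
      have := heig (-μ) x hx hx0 (by rw [neg_smul, ← hTx]; simp)
      simp only [Complex.neg_re] at this
      linarith)
  simpa using this

end LinearMap.IsSymm

lemma iSupIndep.finrank_biSup_eq_sum {K V ι : Type*} [DivisionRing K] [AddCommGroup V]
    [Module K V] [FiniteDimensional K V] [DecidableEq ι] {p : ι → Submodule K V}
    (hp : iSupIndep p) (s : Finset ι) :
    finrank K ↥(⨆ i ∈ s, p i) = ∑ i ∈ s, finrank K (p i) := by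
  induction s using Finset.induction_on with
  | empty => simp
  | insert a s ha ih =>
    have h := Submodule.finrank_sup_add_finrank_inf_eq (p a) (⨆ i ∈ s, p i)
    have hd : Disjoint (p a) (⨆ i ∈ s, p i) := by simpa using hp.disjoint_biSup (y := ↑s) ha
    rw [disjoint_iff.mp hd, finrank_bot, add_zero] at h
    rw [Finset.iSup_insert, Finset.sum_insert ha, h, ih]

lemma Polynomial.card_roots_filter_eq_sum_rootMultiplicity {R : Type*} [CommRing R] [IsDomain R]
    [DecidableEq R] (p : R[X]) (P : R → Prop) [DecidablePred P] :
    (p.roots.filter P).card = ∑ μ ∈ p.roots.toFinset.filter P, p.rootMultiplicity μ := by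
  rw [← Multiset.toFinset_sum_count_eq, Multiset.toFinset_filter]
  refine Finset.sum_congr rfl fun μ hμ => ?_
  rw [Multiset.count_filter_of_pos (Finset.mem_filter.mp hμ).2, count_roots]

/-- The sum of the generalized eigenspaces of `f` for the eigenvalues satisfying `P`. -/
theorem Module.End.exists_invariant_finrank_eq_card_roots_filter {K V : Type*} [Field K]
    [AddCommGroup V] [Module K V] [FiniteDimensional K V] (f : End K V) (P : K → Prop)
    [DecidablePred P] :
    ∃ W : Submodule K V, (∀ x ∈ W, f x ∈ W) ∧
      (∀ (μ : K), ∀ x ∈ W, x ≠ 0 → f x = μ • x → P μ) ∧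
      finrank K W = (f.charpoly.roots.filter P).card := by
  classical
  set S := f.charpoly.roots.toFinset.filter P
  refine ⟨⨆ μ ∈ S, f.maxGenEigenspace μ, fun x hx => ?_, fun μ x hx hx0 hfx => ?_, ?_⟩
  · have hle : ⨆ μ ∈ S, f.maxGenEigenspace μ ≤ (⨆ μ ∈ S, f.maxGenEigenspace μ).comap f :=
      iSup₂_le fun μ hμ y hy => le_iSup₂ (f := fun μ (_ : μ ∈ S) => f.maxGenEigenspace μ) μ hμ
        (mapsTo_maxGenEigenspace_of_comm (Commute.refl f) μ hy)
    exact hle hx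
  · by_contra hμ
    have hS : μ ∉ S := fun h => hμ (Finset.mem_filter.mp h).2
    have hxμ : x ∈ f.maxGenEigenspace μ :=
      eigenspace_le_maxGenEigenspace (mem_eigenspace_iff.mpr hfx)
    have hd : Disjoint (f.maxGenEigenspace μ) (⨆ ν ∈ S, f.maxGenEigenspace ν) := by
      simpa using (independent_maxGenEigenspace f).disjoint_biSup (y := ↑S) hS
    exact hx0 (Submodule.disjoint_def.mp hd x hxμ hx)
  · rw [(independent_maxGenEigenspace f).finrank_biSup_eq_sum,
      Polynomial.card_roots_filter_eq_sum_rootMultiplicity]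
    exact Finset.sum_congr rfl fun μ _ => LinearMap.finrank_maxGenEigenspace_eq f μ

lemma Multiset.card_filter_re_neg_add_card_filter_re_pos (s : Multiset ℂ)
    (hs : ∀ z ∈ s, z.re ≠ 0) :
    (s.filter (·.re < 0)).card + (s.filter (0 < ·.re)).card = s.card := by
  have hnot : s.filter (fun z => ¬z.re < 0) = s.filter (0 < ·.re) :=
    Multiset.filter_congr fun z hz => by simpa only [not_lt] using (hs z hz).symm.le_iff_lt
  rw [← hnot, ← Multiset.card_add, Multiset.filter_add_not]

namespace Matrix

lemma finrank_le_card_of_mulVec_eq_zero {K m n : Type*} [Field K] [Fintype m] [Fintype n]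
    (P : Matrix m n K) (s : Finset m) (W : Submodule K (n → K))
    (hW : ∀ x ∈ W, (∀ i ∈ s, (P *ᵥ x) i = 0) → x = 0) : finrank K W ≤ s.card := by
  let φ : (n → K) →ₗ[K] (s → K) := LinearMap.pi fun i => LinearMap.proj (i : m) ∘ₗ P.mulVecLin
  have hφ : Function.Injective (φ.domRestrict W) := LinearMap.injective_domRestrict_iff.mpr <|
    Submodule.disjoint_def.mpr fun x hx hφx =>
      hW x hx fun i hi => congrFun (LinearMap.mem_ker.mp hφx) ⟨i, hi⟩
  simpa using LinearMap.finrank_le_finrank_of_injective hφ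

variable {n : Type*} [Fintype n] [DecidableEq n]

lemma toLinearMapₛₗ₂'_starRingEnd_apply (A : Matrix n n ℂ) (x y : n → ℂ) :
    toLinearMapₛₗ₂' ℂ (starRingEnd ℂ) (RingHom.id ℂ) A x y = star x ⬝ᵥ (A *ᵥ y) := by
  simp only [toLinearMapₛₗ₂'_apply, dotProduct, mulVec, Finset.mul_sum, smul_eq_mul,
    RingHom.id_apply, Pi.star_apply]
  refine Finset.sum_congr rfl fun _ _ => Finset.sum_congr rfl fun _ _ => ?_
  rw [Complex.star_def]
  ring

namespace IsHermitian

variable {A : Matrix n n ℂ}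

lemma isSymm_toLinearMapₛₗ₂' (hA : A.IsHermitian) :
    (toLinearMapₛₗ₂' ℂ (starRingEnd ℂ) (RingHom.id ℂ) A).IsSymm := by
  refine LinearMap.isSymm_def.mpr fun x y => ?_
  rw [toLinearMapₛₗ₂'_starRingEnd_apply, toLinearMapₛₗ₂'_starRingEnd_apply, ← Complex.star_def,
    star_dotProduct, star_star, star_mulVec, ← dotProduct_mulVec, hA.eq]

lemma re_star_dotProduct_mulVec_eq_sum (hA : A.IsHermitian) (x : n → ℂ) :
    (star x ⬝ᵥ (A *ᵥ x)).re = ∑ i, hA.eigenvalues i *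
      Complex.normSq ((star (hA.eigenvectorUnitary : Matrix n n ℂ) *ᵥ x) i) := by
  set U : Matrix n n ℂ := ↑hA.eigenvectorUnitary
  have hU : star x ᵥ* U = star (star U *ᵥ x) := by
    rw [star_mulVec, star_eq_conjTranspose, conjTranspose_conjTranspose]
  conv_lhs => rw [hA.spectral_theorem]
  rw [Unitary.conjStarAlgAut_apply, ← mulVec_mulVec, ← mulVec_mulVec, dotProduct_mulVec, hU]
  simp only [dotProduct, mulVec_diagonal, Complex.re_sum, Pi.star_apply, Function.comp_apply]
  refine Finset.sum_congr rfl fun i _ => ?_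
  rw [Complex.normSq_apply]
  simp [Complex.mul_re]
  ring

lemma finrank_le_card_eigenvalues_neg (hA : A.IsHermitian) (W : Submodule ℂ (n → ℂ))
    (hW : ∀ x ∈ W, x ≠ 0 → (star x ⬝ᵥ (A *ᵥ x)).re < 0) :
    finrank ℂ W ≤ (Finset.univ.filter fun i => hA.eigenvalues i < 0).card := by
  refine finrank_le_card_of_mulVec_eq_zero (star (hA.eigenvectorUnitary : Matrix n n ℂ)) _ W
    fun x hx hcoord => ?_
  by_contra hx0
  refine (hW x hx hx0).not_ge ?_
  rw [hA.re_star_dotProduct_mulVec_eq_sum]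
  refine Finset.sum_nonneg fun i _ => ?_
  by_cases hi : hA.eigenvalues i < 0
  · simp [hcoord i (by simpa using hi)]
  · exact mul_nonneg (not_lt.mp hi) (Complex.normSq_nonneg _)

lemma finrank_le_card_eigenvalues_pos (hA : A.IsHermitian) (W : Submodule ℂ (n → ℂ))
    (hW : ∀ x ∈ W, x ≠ 0 → 0 < (star x ⬝ᵥ (A *ᵥ x)).re) :
    finrank ℂ W ≤ (Finset.univ.filter fun i => 0 < hA.eigenvalues i).card := by
  refine finrank_le_card_of_mulVec_eq_zero (star (hA.eigenvectorUnitary : Matrix n n ℂ)) _ W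
    fun x hx hcoord => ?_
  by_contra hx0
  refine (hW x hx hx0).not_ge ?_
  rw [hA.re_star_dotProduct_mulVec_eq_sum]
  refine Finset.sum_nonpos fun i _ => ?_
  by_cases hi : 0 < hA.eigenvalues i
  · simp [hcoord i (by simpa using hi)]
  · exact mul_nonpos_of_nonpos_of_nonneg (not_lt.mp hi) (Complex.normSq_nonneg _)

lemma re_star_dotProduct_mulVec_inv_mul_pos {B : Matrix n n ℂ} (hA : A.IsHermitian)
    (hAinv : IsUnit A.det) (hB : ((1 / 2 : ℂ) • (B + Bᴴ)).PosDef) {x : n → ℂ} (hx : x ≠ 0) :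
    0 < (star ((A⁻¹ * B) *ᵥ x) ⬝ᵥ (A *ᵥ x) + star x ⬝ᵥ (A *ᵥ ((A⁻¹ * B) *ᵥ x))).re := by
  have hsum : star ((A⁻¹ * B) *ᵥ x) ⬝ᵥ (A *ᵥ x) + star x ⬝ᵥ (A *ᵥ ((A⁻¹ * B) *ᵥ x))
      = 2 * (star x ⬝ᵥ (((1 / 2 : ℂ) • (B + Bᴴ)) *ᵥ x)) := by
    rw [star_mulVec, ← dotProduct_mulVec, mulVec_mulVec, mulVec_mulVec, ← Matrix.mul_assoc,
      mul_nonsing_inv A hAinv, conjTranspose_mul, conjTranspose_nonsing_inv, hA.eq,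
      Matrix.mul_assoc, nonsing_inv_mul A hAinv, smul_mulVec, add_mulVec, dotProduct_smul,
      dotProduct_add]
    simp only [Matrix.mul_one, Matrix.one_mul, smul_eq_mul]
    ring
  rw [hsum]
  have := (Complex.pos_iff.mp (hB.dotProduct_mulVec_pos hx)).1
  simp only [Complex.mul_re, Complex.re_ofNat, Complex.im_ofNat, zero_mul, sub_zero]
  linarith

end IsHermitian

end Matrix

/-- If `A` is Hermitian invertible with exactly `p` negative and `N − p` positive
eigenvalues, and `Re B` is positive definite, then `A⁻¹B` has exactly `p` eigenvalues (with
algebraic multiplicity, i.e. as roots of the characteristic polynomial) of negative real part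
and `N − p` of positive real part. -/
theorem stmt_5 {N : ℕ} (p : ℕ) (A B : Matrix (Fin N) (Fin N) ℂ)
    (hA : A.IsHermitian) (hAinv : IsUnit A.det)
    (hB : ((1 / 2 : ℂ) • (B + Bᴴ)).PosDef)
    (hneg : (Finset.univ.filter fun i => hA.eigenvalues i < 0).card = p)
    (hpos : (Finset.univ.filter fun i => 0 < hA.eigenvalues i).card = N - p) :
    ((A⁻¹ * B).charpoly.roots.filter fun μ => μ.re < 0).card = p
    ∧ ((A⁻¹ * B).charpoly.roots.filter fun μ => 0 < μ.re).card = N - p := by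
  rw [← charpoly_toLin']
  set f := toLin' (A⁻¹ * B)
  set h := toLinearMapₛₗ₂' ℂ (starRingEnd ℂ) (RingHom.id ℂ) A
  have hh : h.IsSymm := hA.isSymm_toLinearMapₛₗ₂'
  have hform : ∀ x y, h x y = star x ⬝ᵥ (A *ᵥ y) := toLinearMapₛₗ₂'_starRingEnd_apply A
  have hacc : ∀ x, x ≠ 0 → 0 < (h (f x) x + h x (f x)).re := fun x hx => by
    simpa [hform, f] using hA.re_star_dotProduct_mulVec_inv_mul_pos hAinv hB hx
  obtain ⟨Wm, hWmf, hWmeig, hWm⟩ := End.exists_invariant_finrank_eq_card_roots_filter f (·.re < 0)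
  obtain ⟨Wp, hWpf, hWpeig, hWp⟩ := End.exists_invariant_finrank_eq_card_roots_filter f (0 < ·.re)
  have hm := hA.finrank_le_card_eigenvalues_neg Wm fun x hx hx0 => by
    simpa [hform] using hh.re_apply_self_neg_of_re_eigenvalue_neg f Wm hWmf
      (fun y _ hy0 => hacc y hy0) hWmeig x hx hx0
  have hp := hA.finrank_le_card_eigenvalues_pos Wp fun x hx hx0 => by
    simpa [hform] using hh.re_apply_self_pos_of_re_eigenvalue_pos f Wp hWpf
      (fun y _ hy0 => hacc y hy0) hWpeig x hx hx0
  have htot := f.charpoly.roots.card_filter_re_neg_add_card_filter_re_pos fun μ hμ =>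
    hh.re_ne_zero_of_hasEigenvalue hacc
      ((End.hasEigenvalue_iff_isRoot_charpoly f μ).mpr (isRoot_of_mem_roots hμ))
  rw [IsAlgClosed.card_roots_eq_natDegree, LinearMap.charpoly_natDegree, finrank_fin_fun] at htot
  have hpN : p ≤ N := hneg ▸ (Finset.card_filter_le _ _).trans (by simp)
  rw [hWm, hneg] at hm
  rw [hWp, hpos] at hp
  omega
end
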